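/- Let K be a convex body in ℝⁿ with C² boundary and strictly positive curvature, containing the origin in its interior, and set P_K(x) = D²(‖x‖²_K/2) for x ∈ ℝⁿ \ {0}. Then for every x ∈ ∂K: P_K(x)(x,x) = 1, P_K(x)(x,u) = 0 for all u ∈ T_x ∂K, and P_K(x)(u,v) = II_{∂K}(u,v)/h_K(ν_K(x)) for all u, v ∈ T_x ∂K. In particular, the restriction of P_K to T∂K × T∂K is a positive-definite Riemannian metric on ∂K. -/

import Mathlib

open scoped RealInnerProductSpace ENNReal NNReal Pointwise
open MeasureTheory Metric Set

noncomputable section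

/-- `Euc n` is Euclidean space `ℝⁿ`. -/
abbrev Euc (n : ℕ) := EuclideanSpace ℝ (Fin n)

/-- A convex body in `ℝⁿ` (with the origin as an interior point). -/
def IsConvexBody (n : ℕ) (K : Set (Euc n)) : Prop :=
  IsCompact K ∧ Convex ℝ K ∧ (0 : Euc n) ∈ interior K

/-- An origin-symmetric set. -/
def IsOriginSymmetric {n : ℕ} (K : Set (Euc n)) : Prop := ∀ x ∈ K, -x ∈ K

/-- The support function `h_K (x) = max_{y ∈ K} ⟨x, y⟩`. -/
def suppFn {n : ℕ} (K : Set (Euc n)) (x : Euc n) : ℝ :=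
  sSup ((fun y => ⟪x, y⟫) '' K)

/-- Half of the squared Minkowski gauge, `‖x‖_K² / 2`. -/
def halfGaugeSq {n : ℕ} (K : Set (Euc n)) (x : Euc n) : ℝ := gauge K x ^ 2 / 2

/-- The Euclidean Hessian `D²f(x)(u,v)`. -/
def hess {n : ℕ} (f : Euc n → ℝ) (x u v : Euc n) : ℝ :=
  fderiv ℝ (fun y => fderiv ℝ f y v) x u

/-- The Gauss map (outer unit normal) of `∂K`, extended `0`-homogeneously to `ℝⁿ \ {0}`:
for a smooth convex body containing the origin in its interior, the outer unit normal at
`x ∈ ∂K` is the normalized gradient of the Minkowski gauge. -/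
def gaussMap {n : ℕ} (K : Set (Euc n)) (x : Euc n) : Euc n :=
  ‖gradient (gauge K) x‖⁻¹ • gradient (gauge K) x

/-- The second fundamental form `II_{∂K}(x)(u,v)` of `∂K` (for tangent vectors `u, v`),
via the Weingarten map, i.e. the differential of the Gauss map. -/
def secondFF {n : ℕ} (K : Set (Euc n)) (x u v : Euc n) : ℝ :=
  ⟪fderiv ℝ (gaussMap K) x u, v⟫

/-- `K ∈ 𝒦²₊`: a convex body with `C²`-smooth boundary (equivalently, `‖·‖_K²` is `C²` away
from the origin) and strictly positive curvature (positive-definite second fundamental form). -/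
def IsC2PlusBody (n : ℕ) (K : Set (Euc n)) : Prop :=
  IsConvexBody n K ∧ ContDiffOn ℝ 2 (halfGaugeSq K) {(0 : Euc n)}ᶜ ∧
  ∀ x ∈ frontier K, ∀ u : Euc n, ⟪gaussMap K x, u⟫ = 0 → u ≠ 0 → 0 < secondFF K x u u

/-- `K ∈ 𝒦^{2,r}₊`: as `IsC2PlusBody`, with second derivatives of `‖·‖_K²/2` moreover
`r`-Hölder continuous on the unit sphere. -/
def IsC2HolderBody (n : ℕ) (r : ℝ) (K : Set (Euc n)) : Prop :=
  IsC2PlusBody n K ∧ ∃ C : ℝ, ∀ x ∈ sphere (0 : Euc n) 1, ∀ y ∈ sphere (0 : Euc n) 1,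
    ‖fderiv ℝ (fun z => fderiv ℝ (halfGaugeSq K) z) x
      - fderiv ℝ (fun z => fderiv ℝ (halfGaugeSq K) z) y‖ ≤ C * ‖x - y‖ ^ r

/-- `K ∈ 𝒦^{2,α}₊` for some Hölder exponent `α ∈ (0,1]`. -/
def IsC2AlphaBody (n : ℕ) (K : Set (Euc n)) : Prop :=
  ∃ r : ℝ, 0 < r ∧ r ≤ 1 ∧ IsC2HolderBody n r K

/-- `K ∈ 𝒦^∞₊`: a `C^∞`-smooth convex body with strictly positive curvature. -/
def IsSmoothBody (n : ℕ) (K : Set (Euc n)) : Prop :=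
  IsConvexBody n K ∧ ContDiffOn ℝ (⊤ : ℕ∞) (halfGaugeSq K) {(0 : Euc n)}ᶜ ∧
  ∀ x ∈ frontier K, ∀ u : Euc n, ⟪gaussMap K x, u⟫ = 0 → u ≠ 0 → 0 < secondFF K x u u

/-- The surface-area measure `S_K` of `K`, as a measure on `ℝⁿ` concentrated on `S^{n-1}`:
the push-forward of the `(n-1)`-dimensional Hausdorff measure on `∂K` via the Gauss map. -/
def surfaceMeasure (n : ℕ) (K : Set (Euc n)) : Measure (Euc n) :=
  Measure.map (gaussMap K) ((μH[(n : ℝ) - 1] : Measure (Euc n)).restrict (frontier K))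

/-- The `L^p` surface-area measure `S_p K = h_K^{1-p} S_K`. -/
def lpSurfaceMeasure (n : ℕ) (p : ℝ) (K : Set (Euc n)) : Measure (Euc n) :=
  (surfaceMeasure n K).withDensity fun θ => ENNReal.ofReal (suppFn K θ ^ (1 - p))

/-- The cone-volume measure `V_K = (1/n) h_K S_K`. -/
def coneVolumeMeasure (n : ℕ) (K : Set (Euc n)) : Measure (Euc n) :=
  (n : ℝ≥0∞)⁻¹ • (surfaceMeasure n K).withDensity fun θ => ENNReal.ofReal (suppFn K θ)

/-- The polar body `K* = {x : ⟨x,y⟩ ≤ 1 ∀ y ∈ K}`. -/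
def polarBody {n : ℕ} (K : Set (Euc n)) : Set (Euc n) := {x | ∀ y ∈ K, ⟪x, y⟫ ≤ 1}

/-- The `0`-homogeneous extension to `ℝⁿ \ {0}` of a function on the unit sphere. -/
def zeroHomExt {n : ℕ} (f : Euc n → ℝ) (x : Euc n) : ℝ := f (‖x‖⁻¹ • x)

/-- The spherical gradient `∇̄ f` of a function on the unit sphere (the Euclidean gradient of
its `0`-homogeneous extension). -/
def sphGrad {n : ℕ} (f : Euc n → ℝ) (θ : Euc n) : Euc n := gradient (zeroHomExt f) θ

/-- Orthogonal projection onto the tangent space `θ^⊥` of the unit sphere at `θ`. -/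
def tanProj {n : ℕ} (θ : Euc n) : Euc n →L[ℝ] Euc n :=
  ContinuousLinearMap.id ℝ (Euc n) - (innerSL ℝ θ).smulRight θ

/-- For a `1`-homogeneous `g : ℝⁿ → ℝ` (e.g. `g = h_K`), the endomorphism of `ℝⁿ` acting as the
Hessian `D²g(θ)` (`= ∇̄²g + g δ̄` on `θ^⊥`) on the tangent space of the sphere at `θ`, and as the
identity in the radial direction. -/
def hessEnd {n : ℕ} (g : Euc n → ℝ) (θ : Euc n) : Module.End ℝ (Euc n) :=
  (((fderiv ℝ (gradient g) θ).comp (tanProj θ)) + (innerSL ℝ θ).smulRight θ).toLinearMap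

/-- `|grad_{g_K} f|²_{g_K}(θ) = h_K(θ) ⟨(D̄²h_K)⁻¹ ∇̄f, ∇̄f⟩`, the squared norm of the gradient
of `f` with respect to the centro-affine metric `g_K = (∇̄²h_K + h_K δ̄)/h_K`. -/
def gradNormSqGK (n : ℕ) (K : Set (Euc n)) (f : Euc n → ℝ) (θ : Euc n) : ℝ :=
  suppFn K θ * ⟪Ring.inverse (hessEnd (suppFn K) θ) (sphGrad f θ), sphGrad f θ⟫

/-- The first non-zero even eigenvalue `λ_{1,e}(-Δ_K)` of the Hilbert–Brunn–Minkowski operator: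
the infimum of the Rayleigh quotients `∫ |grad f|²_{g_K} dV_K / ∫ f² dV_K` over non-zero even
`C²` functions `f` on `S^{n-1}` with `∫ f dV_K = 0`. -/
def lambdaOneEven (n : ℕ) (K : Set (Euc n)) : ℝ :=
  sInf { r : ℝ | ∃ f : Euc n → ℝ, ContDiffOn ℝ 2 (zeroHomExt f) {(0 : Euc n)}ᶜ ∧
    (∀ x, f (-x) = f x) ∧
    (∫ θ, f θ ∂(coneVolumeMeasure n K)) = 0 ∧
    (∫ θ, (f θ) ^ 2 ∂(coneVolumeMeasure n K)) ≠ 0 ∧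
    r = (∫ θ, gradNormSqGK n K f θ ∂(coneVolumeMeasure n K)) /
        (∫ θ, (f θ) ^ 2 ∂(coneVolumeMeasure n K)) }

/-- The Hilbert–Brunn–Minkowski operator
`Δ_K f = ((D̄²h_K)⁻¹)^{ij} [∇̄²_{ij}(f h_K) + (f h_K) δ̄_{ij}] - (n-1) f`. -/
def hbmLaplacian (n : ℕ) (K : Set (Euc n)) (f : Euc n → ℝ) (θ : Euc n) : ℝ :=
  LinearMap.trace ℝ (Euc n)
    ((Ring.inverse (hessEnd (suppFn K) θ)) ∘ₗ
      ((fderiv ℝ (gradient (fun x => zeroHomExt f x * suppFn K x)) θ).comp (tanProj θ)).toLinearMap)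
    - ((n : ℝ) - 1) * f θ


/-- The curvature-pinching condition `a·δ ≤ D²(‖x‖_K²/2) ≤ b·δ` (as quadratic forms)
for all `x` in the unit sphere `S^{n-1}`. -/
def HessPinched (n : ℕ) (K : Set (Euc n)) (a b : ℝ) : Prop :=
  ∀ x ∈ sphere (0 : Euc n) 1, ∀ u : Euc n,
    a * ‖u‖ ^ 2 ≤ hess (halfGaugeSq K) x u u ∧ hess (halfGaugeSq K) x u u ≤ b * ‖u‖ ^ 2

/-- The projection `π_{∂K}(x) : T_x ℝⁿ → T_x ∂K` onto the tangent space of `∂K` at `x`,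
parallel to the radial direction `x`. -/
def radialTanProj {n : ℕ} (K : Set (Euc n)) (x u : Euc n) : Euc n :=
  u - (⟪gaussMap K x, u⟫ / ⟪gaussMap K x, x⟫) • x

open scoped Classical in
/-- The `C^{2,r}`-distance between two convex bodies: the `C²`-norm of the difference of their
support functions on the unit sphere, plus the `r`-Hölder seminorm of its second derivative. -/
def c2aDist (n : ℕ) (r : ℝ) (K L : Set (Euc n)) : ℝ :=
  (⨆ θ : sphere (0 : Euc n) 1, |suppFn K ↑θ - suppFn L ↑θ|) +
  (⨆ θ : sphere (0 : Euc n) 1, ‖fderiv ℝ (suppFn K) ↑θ - fderiv ℝ (suppFn L) ↑θ‖) +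
  (⨆ θ : sphere (0 : Euc n) 1,
    ‖fderiv ℝ (fun z => fderiv ℝ (suppFn K) z) ↑θ
      - fderiv ℝ (fun z => fderiv ℝ (suppFn L) z) ↑θ‖) +
  (⨆ q : sphere (0 : Euc n) 1 × sphere (0 : Euc n) 1,
    if (q.1 : Euc n) = q.2 then 0 else
      ‖(fderiv ℝ (fun z => fderiv ℝ (suppFn K) z) ↑q.1
          - fderiv ℝ (fun z => fderiv ℝ (suppFn L) z) ↑q.1)
        - (fderiv ℝ (fun z => fderiv ℝ (suppFn K) z) ↑q.2
          - fderiv ℝ (fun z => fderiv ℝ (suppFn L) z) ↑q.2)‖ / ‖(q.1 : Euc n) - ↑q.2‖ ^ r)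

/-- The family `F_γ` of origin-symmetric `C^{2,r}` convex bodies with strictly positive curvature
admitting, for some `ℓ ∈ GL(n,ℝ)`, a curvature-pinching `a·δ ≤ D²(‖x‖_{ℓK}²/2) ≤ b·δ` on the
unit sphere with ratio `b/a = γ`. -/
def pinchedFamily (n : ℕ) (r γ : ℝ) : Set (Set (Euc n)) :=
  {K | IsC2HolderBody n r K ∧ IsOriginSymmetric K ∧
    ∃ ℓ : Euc n ≃ₗ[ℝ] Euc n, ∃ a b : ℝ, 0 < a ∧ a ≤ b ∧ b / a = γ ∧
      HessPinched n (⇑ℓ '' K) a b}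

/-! Write `f = ‖·‖_K²/2`. Being positively `2`-homogeneous, `f` satisfies Euler's identity
`Df(x)x = 2f(x) = 1` on `∂K`, and `Df` is `1`-homogeneous, so `P_K(x)(x, ·) = Df(x)`, which
vanishes on `T_x ∂K = ∇f(x)^⊥`. The Gauss map is `∇f/|∇f|` near `∂K`, so on tangent vectors
`II = P_K/|∇f(x)|`. Finally `x` maximizes `f` over `K`, hence `ν_K(x)` supports `K` at `x` and
`h_K(ν_K(x)) = ⟨ν_K(x), x⟩ = 1/|∇f(x)|`. -/

open InnerProductSpace Topology

section Calculus

variable {E F : Type*} [NormedAddCommGroup E] [NormedSpace ℝ E]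
  [NormedAddCommGroup F] [NormedSpace ℝ F]

theorem fderiv_apply_self_of_homogeneous {f : E → F} {x : E} {k : ℕ}
    (hf : DifferentiableAt ℝ f x) (hom : ∀ t : ℝ, 0 < t → f (t • x) = t ^ k • f x) :
    fderiv ℝ f x x = (k : ℝ) • f x := by
  have hline : HasDerivAt (fun t : ℝ => t • x) x 1 := by
    simpa using (hasDerivAt_id (1 : ℝ)).smul_const x
  have hf1 : HasFDerivAt f (fderiv ℝ f x) ((1 : ℝ) • x) := by simpa using hf.hasFDerivAt
  have hray : HasDerivAt (fun t : ℝ => f (t • x)) (fderiv ℝ f x x) 1 :=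
    hf1.comp_hasDerivAt 1 hline
  have hpow : HasDerivAt (fun t : ℝ => t ^ k • f x) ((k : ℝ) • f x) 1 := by
    simpa using (hasDerivAt_pow k (1 : ℝ)).smul_const (f x)
  refine hray.unique (hpow.congr_of_eventuallyEq ?_)
  filter_upwards [Ioi_mem_nhds one_pos] with t ht using hom t ht

theorem fderiv_smul_of_homogeneous {f : E → F} {k : ℕ} {c : ℝ} (hc : c ≠ 0)
    (hom : ∀ y, f (c • y) = c ^ (k + 1) • f y) (x : E) :
    fderiv ℝ f (c • x) = c ^ k • fderiv ℝ f x := by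
  have h : c • fderiv ℝ f (c • x) = c ^ (k + 1) • fderiv ℝ f x := by
    rw [← fderiv_comp_smul, show (f <| c • ·) = c ^ (k + 1) • f from funext hom,
      fderiv_const_smul_field]
    rfl
  rw [pow_succ', mul_smul] at h
  exact smul_right_injective _ hc h

theorem fderiv_fderiv_apply_self_of_homogeneous {f : E → F} {x : E} {k : ℕ}
    (hf : DifferentiableAt ℝ (fderiv ℝ f) x)
    (hom : ∀ t : ℝ, 0 < t → ∀ y, f (t • y) = t ^ (k + 1) • f y) :
    fderiv ℝ (fderiv ℝ f) x x = (k : ℝ) • fderiv ℝ f x :=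
  fderiv_apply_self_of_homogeneous hf fun t ht =>
    fderiv_smul_of_homogeneous ht.ne' (hom t ht) x

theorem ContDiffAt.differentiableAt_fderiv {f : E → F} {x : E} (hf : ContDiffAt ℝ 2 f x) :
    DifferentiableAt ℝ (fderiv ℝ f) x :=
  (hf.fderiv_right (m := 1) le_rfl).differentiableAt one_ne_zero

theorem HasFDerivAt.of_sq_div_two {g : E → ℝ} {g' : StrongDual ℝ E} {x : E}
    (hg : ∀ y, 0 ≤ g y) (hx : 0 < g x)
    (h : HasFDerivAt (fun y => g y ^ 2 / 2) g' x) : HasFDerivAt g ((g x)⁻¹ • g') x := by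
  have hsqrt : ∀ y, √(2 * (g y ^ 2 / 2)) = g y := fun y => by
    rw [mul_div_cancel₀ _ two_ne_zero, Real.sqrt_sq (hg y)]
  have := (h.const_mul 2).sqrt (by positivity)
  simp only [hsqrt] at this
  convert this using 1
  rw [smul_smul]
  congr 1
  field_simp

end Calculus

theorem hess_eq_fderiv_fderiv_apply {n : ℕ} {f : Euc n → ℝ} {x : Euc n}
    (hf : DifferentiableAt ℝ (fderiv ℝ f) x) (u v : Euc n) :
    hess f x u v = fderiv ℝ (fderiv ℝ f) x u v := by
  simp [hess, fderiv_clm_apply hf (differentiableAt_const v)]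

section InnerProduct

variable {E H : Type*} [NormedAddCommGroup E] [InnerProductSpace ℝ E]
  [NormedAddCommGroup H] [InnerProductSpace ℝ H]

theorem hasFDerivAt_gradient [CompleteSpace E] {f : E → ℝ} {x : E}
    (hf : DifferentiableAt ℝ (fderiv ℝ f) x) :
    HasFDerivAt (gradient f)
      ((toDual ℝ E).symm.toContinuousLinearEquiv.toContinuousLinearMap.comp
        (fderiv ℝ (fderiv ℝ f) x)) x :=
  (toDual ℝ E).symm.toContinuousLinearEquiv.hasFDerivAt.comp x hf.hasFDerivAt

theorem inner_fderiv_gradient [CompleteSpace E] {f : E → ℝ} {x : E}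
    (hf : DifferentiableAt ℝ (fderiv ℝ f) x) (u v : E) :
    ⟪fderiv ℝ (gradient f) x u, v⟫ = fderiv ℝ (fderiv ℝ f) x u v := by
  rw [(hasFDerivAt_gradient hf).fderiv]
  exact toDual_symm_apply

theorem inner_fderiv_normalize_of_inner_eq_zero {F : E → H} {x : E}
    (hF : DifferentiableAt ℝ F x) (hx : F x ≠ 0) {v : H} (hv : ⟪F x, v⟫ = 0) (u : E) :
    ⟪fderiv ℝ (fun y => NormedSpace.normalize (F y)) x u, v⟫ =
      ‖F x‖⁻¹ * ⟪fderiv ℝ F x u, v⟫ := by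
  have hN : DifferentiableAt ℝ (fun y => ‖F y‖⁻¹) x :=
    (hF.norm ℝ hx).fun_inv (norm_ne_zero_iff.2 hx)
  simp only [NormedSpace.normalize]
  rw [fderiv_fun_smul hN hF]
  simp [inner_add_left, real_inner_smul_left, hv]

end InnerProduct

section ConvexBody

variable {n : ℕ} {K : Set (Euc n)}

theorem IsConvexBody.mem_nhds_zero (hK : IsConvexBody n K) : K ∈ 𝓝 0 :=
  mem_interior_iff_mem_nhds.1 hK.2.2

theorem IsConvexBody.gauge_pos (hK : IsConvexBody n K) {x : Euc n} (hx : x ≠ 0) :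
    0 < gauge K x :=
  (_root_.gauge_pos (absorbent_nhds_zero hK.mem_nhds_zero)
    ((NormedSpace.isVonNBounded_iff ℝ).2 hK.1.isBounded)).2 hx

theorem IsConvexBody.gauge_eq_one_of_mem_frontier (hK : IsConvexBody n K) {x : Euc n}
    (hx : x ∈ frontier K) : gauge K x = 1 :=
  (gauge_eq_one_iff_mem_frontier hK.2.1 hK.mem_nhds_zero).2 hx

theorem IsConvexBody.ne_zero_of_mem_frontier (hK : IsConvexBody n K) {x : Euc n}
    (hx : x ∈ frontier K) : x ≠ 0 := by
  rintro rfl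
  simpa using hK.gauge_eq_one_of_mem_frontier hx

theorem halfGaugeSq_smul (K : Set (Euc n)) {c : ℝ} (hc : 0 ≤ c) (y : Euc n) :
    halfGaugeSq K (c • y) = c ^ 2 * halfGaugeSq K y := by
  simp only [halfGaugeSq, gauge_smul_of_nonneg hc, smul_eq_mul]
  ring

theorem fderiv_halfGaugeSq_apply_self {x : Euc n}
    (hd : DifferentiableAt ℝ (halfGaugeSq K) x) :
    fderiv ℝ (halfGaugeSq K) x x = gauge K x ^ 2 := by
  rw [fderiv_apply_self_of_homogeneous hd fun t ht => halfGaugeSq_smul K ht.le x, halfGaugeSq]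
  simp only [Nat.cast_ofNat, smul_eq_mul]
  ring

theorem IsConvexBody.gradient_halfGaugeSq_ne_zero (hK : IsConvexBody n K) {x : Euc n}
    (hx : x ≠ 0) (hd : DifferentiableAt ℝ (halfGaugeSq K) x) :
    gradient (halfGaugeSq K) x ≠ 0 := by
  intro h
  have := fderiv_halfGaugeSq_apply_self hd
  rw [← inner_gradient_left, h, inner_zero_left] at this
  exact (pow_pos (hK.gauge_pos hx) 2).ne this

theorem IsConvexBody.gaussMap_eq (hK : IsConvexBody n K) {x : Euc n} (hx : x ≠ 0)
    (hd : DifferentiableAt ℝ (halfGaugeSq K) x) :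
    gaussMap K x = NormedSpace.normalize (gradient (halfGaugeSq K) x) := by
  have hpos := hK.gauge_pos hx
  have hgauge := HasFDerivAt.of_sq_div_two (fun y => gauge_nonneg y) hpos
    (hd.hasFDerivAt : HasFDerivAt (fun y => gauge K y ^ 2 / 2) _ x)
  rw [gaussMap, gradient, hgauge.fderiv, map_smul,
    ← NormedSpace.normalize_smul_of_pos (inv_pos.2 hpos)]
  rfl

theorem IsConvexBody.isMaxOn_halfGaugeSq (hK : IsConvexBody n K) {x : Euc n}
    (hx : x ∈ frontier K) : IsMaxOn (halfGaugeSq K) K x := fun y hy => by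
  have := pow_le_one₀ (n := 2) (gauge_nonneg y) (gauge_le_one_of_mem hy)
  simp only [mem_ofPred_eq, halfGaugeSq, hK.gauge_eq_one_of_mem_frontier hx]
  linarith

theorem IsConvexBody.fderiv_halfGaugeSq_sub_nonpos (hK : IsConvexBody n K) {x y : Euc n}
    (hx : x ∈ frontier K) (hd : DifferentiableAt ℝ (halfGaugeSq K) x) (hy : y ∈ K) :
    fderiv ℝ (halfGaugeSq K) x (y - x) ≤ 0 :=
  (hK.isMaxOn_halfGaugeSq hx).localize.hasFDerivWithinAt_nonpos
    hd.hasFDerivAt.hasFDerivWithinAt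
    (sub_mem_posTangentConeAt_of_segment_subset
      (hK.2.1.segment_subset (hK.1.isClosed.frontier_subset hx) hy))

theorem suppFn_eq_inner_of_forall_inner_le {w x : Euc n} (hx : x ∈ K)
    (h : ∀ y ∈ K, ⟪w, y⟫ ≤ ⟪w, x⟫) : suppFn K w = ⟪w, x⟫ :=
  IsGreatest.csSup_eq ⟨⟨x, hx, rfl⟩, by rintro _ ⟨y, hy, rfl⟩; exact h y hy⟩

theorem IsConvexBody.suppFn_gaussMap (hK : IsConvexBody n K) {x : Euc n}
    (hx : x ∈ frontier K) (hd : DifferentiableAt ℝ (halfGaugeSq K) x) :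
    suppFn K (gaussMap K x) = ⟪gaussMap K x, x⟫ := by
  refine suppFn_eq_inner_of_forall_inner_le (hK.1.isClosed.frontier_subset hx) fun y hy => ?_
  have hsub := hK.fderiv_halfGaugeSq_sub_nonpos hx hd hy
  rw [← inner_gradient_left] at hsub
  rw [← sub_nonpos, ← inner_sub_right, hK.gaussMap_eq (hK.ne_zero_of_mem_frontier hx) hd,
    NormedSpace.normalize, real_inner_smul_left]
  exact mul_nonpos_of_nonneg_of_nonpos (by positivity) hsub

theorem IsConvexBody.secondFF_eq (hK : IsConvexBody n K)
    (hC2 : ContDiffOn ℝ 2 (halfGaugeSq K) {0}ᶜ) {x v : Euc n} (hx : x ≠ 0)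
    (hv : ⟪gaussMap K x, v⟫ = 0) (u : Euc n) :
    secondFF K x u v = ‖gradient (halfGaugeSq K) x‖⁻¹ * hess (halfGaugeSq K) x u v := by
  have hC2at : ∀ y : Euc n, y ≠ 0 → ContDiffAt ℝ 2 (halfGaugeSq K) y := fun y hy =>
    hC2.contDiffAt (isOpen_compl_singleton.mem_nhds hy)
  have hd : ∀ y : Euc n, y ≠ 0 → DifferentiableAt ℝ (halfGaugeSq K) y := fun y hy =>
    (hC2at y hy).differentiableAt (by norm_num)
  have hd2 := (hC2at x hx).differentiableAt_fderiv
  have hν : gaussMap K =ᶠ[𝓝 x]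
      fun y => NormedSpace.normalize (gradient (halfGaugeSq K) y) := by
    filter_upwards [isOpen_compl_singleton.mem_nhds hx] with y hy
    exact hK.gaussMap_eq hy (hd y hy)
  have hF := hK.gradient_halfGaugeSq_ne_zero hx (hd x hx)
  have hv' : ⟪gradient (halfGaugeSq K) x, v⟫ = 0 := by
    rw [hK.gaussMap_eq hx (hd x hx), NormedSpace.normalize, real_inner_smul_left] at hv
    exact (mul_eq_zero.1 hv).resolve_left (inv_ne_zero (norm_ne_zero_iff.2 hF))
  rw [secondFF, hν.fderiv_eq, inner_fderiv_normalize_of_inner_eq_zero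
    (hasFDerivAt_gradient hd2).differentiableAt hF hv' u, inner_fderiv_gradient hd2,
    hess_eq_fderiv_fderiv_apply hd2]

end ConvexBody

/-- **Lemma 2.2 (the anisotropic metric `P_K` on `∂K`)**: for `K ∈ 𝒦²₊` and `x ∈ ∂K`:
`P_K(x)(x,x) = 1`; `P_K(x)(x,u) = 0` for all `u ∈ T_x ∂K`; and
`P_K(x)(u,v) = II_{∂K}(u,v) / h_K(ν_K(x))` for all `u, v ∈ T_x ∂K`.
In particular the restriction of `P_K = D²(‖·‖_K²/2)` to `T∂K × T∂K` is positive definite,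
i.e. a Riemannian metric on `∂K`. -/
theorem anisotropic_metric_on_boundary
    (n : ℕ) (K : Set (Euc n)) (hK : IsC2PlusBody n K) :
    ∀ x ∈ frontier K,
      hess (halfGaugeSq K) x x x = 1 ∧
      (∀ u : Euc n, ⟪gaussMap K x, u⟫ = 0 →
        hess (halfGaugeSq K) x x u = 0 ∧
        (∀ v : Euc n, ⟪gaussMap K x, v⟫ = 0 →
          hess (halfGaugeSq K) x u v = secondFF K x u v / suppFn K (gaussMap K x)) ∧
        (u ≠ 0 → 0 < hess (halfGaugeSq K) x u u)) := by
  obtain ⟨hbody, hC2, hcurv⟩ := hK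
  intro x hx
  have hx0 := hbody.ne_zero_of_mem_frontier hx
  have hC2x : ContDiffAt ℝ 2 (halfGaugeSq K) x :=
    hC2.contDiffAt (isOpen_compl_singleton.mem_nhds hx0)
  have hd : DifferentiableAt ℝ (halfGaugeSq K) x := hC2x.differentiableAt (by norm_num)
  have hd2 := hC2x.differentiableAt_fderiv
  have hxx : fderiv ℝ (halfGaugeSq K) x x = 1 := by
    rw [fderiv_halfGaugeSq_apply_self hd, hbody.gauge_eq_one_of_mem_frontier hx, one_pow]
  have hradial : ∀ u, hess (halfGaugeSq K) x x u = fderiv ℝ (halfGaugeSq K) x u := fun u => by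
    rw [hess_eq_fderiv_fderiv_apply hd2, fderiv_fderiv_apply_self_of_homogeneous hd2
      fun t ht => halfGaugeSq_smul K ht.le, Nat.cast_one, one_smul]
  set N := ‖gradient (halfGaugeSq K) x‖
  have hN : 0 < N := norm_pos_iff.2 (hbody.gradient_halfGaugeSq_ne_zero hx0 hd)
  have hνu : ∀ u, ⟪gaussMap K x, u⟫ = N⁻¹ * fderiv ℝ (halfGaugeSq K) x u := fun u => by
    rw [hbody.gaussMap_eq hx0 hd, NormedSpace.normalize, real_inner_smul_left,
      inner_gradient_left]
  have hsupp : suppFn K (gaussMap K x) = N⁻¹ := by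
    rw [hbody.suppFn_gaussMap hx hd, hνu, hxx, mul_one]
  refine ⟨by rw [hradial, hxx], fun u hu => ⟨?_, fun v hv => ?_, fun hu0 => ?_⟩⟩
  · rw [hνu, mul_eq_zero, or_iff_right (inv_ne_zero hN.ne')] at hu
    rw [hradial, hu]
  · rw [hbody.secondFF_eq hC2 hx0 hv, hsupp, mul_div_cancel_left₀ _ (inv_ne_zero hN.ne')]
  · have hcurv := hcurv x hx u hu hu0
    rw [hbody.secondFF_eq hC2 hx0 hu] at hcurv
    exact pos_of_mul_pos_right hcurv (inv_nonneg.2 hN.le)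

end
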